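/- arXiv:2402.09647 — 4 statements merged into one kernel-verified Lean document; each statement's English description precedes it below -/
import Mathlib

section
/- Let α ∈ ℝ be such that 1, α, α² are linearly independent over ℚ. Let a, b, c, d ∈ ℤ with d ≠ 0 and c + α·d ≠ 0, and set θ = (a + α·b)/(c + α·d); assume θ is irrational. Then the point (0, 0) belongs to the interior (in ℝ²) of the closure of the set {(⟨α·n⟩, ⟨α·⌊θ·n⌉⟩) : n ∈ ℤ}. -/
/-!
Put `e = c + α d`, so that `θ e = a + α b`. If `k α = x + m₁` and `k θ = y + m₂` with
`m₁, m₂ ∈ ℤ` and `x, y` small, then `n = d k` has `⟨α n⟩ = d x` and `⌊θ n⌉ = -d m₂`, and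
`θ e = a + α b` turns `α ⌊θ n⌉` into `b x - e y` modulo `ℤ`. The map `(x, y) ↦ (d x, b x - e y)`
is invertible, so it suffices that such pairs `(x, y)` are dense near `0`, i.e. that the multiples
of `(α, θ)` are dense in the torus `ℝ² / ℤ²`. As `1, α, θ` are independent over `ℚ`, this is
Kronecker's theorem, which follows from unique ergodicity: no nontrivial character is `1` at
`ξ = (α, θ)`, so every `ξ`-invariant probability measure has the Fourier coefficients of Haar
measure. Hence the Haar measure of the closure of `ℤ ξ` is that of the torus, and this closed
subgroup is the whole torus.
-/

namespace Stmt8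

/-- The signed fractional part `⟨x⟩ = x - ⌊x⌉ ∈ [-1/2, 1/2)`. -/
noncomputable def sfrac (x : ℝ) : ℝ := x - round x

end Stmt8

open MeasureTheory Set

noncomputable def ContinuousMap.integralCLM {X : Type*} [TopologicalSpace X] [CompactSpace X]
    [MeasurableSpace X] [BorelSpace X] (μ : Measure X) [IsFiniteMeasure μ] :
    C(X, ℂ) →L[ℂ] ℂ :=
  (L1.integralCLM' ℂ).comp (ContinuousMap.toLp 1 μ ℂ)

theorem ContinuousMap.integralCLM_apply {X : Type*} [TopologicalSpace X] [CompactSpace X]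
    [MeasurableSpace X] [BorelSpace X] (μ : Measure X) [IsFiniteMeasure μ] (f : C(X, ℂ)) :
    integralCLM μ f = ∫ x, f x ∂μ := by
  rw [integralCLM, ContinuousLinearMap.comp_apply, ← L1.integral_eq', L1.integral_eq_integral]
  exact integral_congr_ae (ContinuousMap.coeFn_toLp μ f)

theorem integral_eq_zero_of_measurePreserving_add_left {G : Type*} [AddGroup G]
    [MeasurableSpace G] [MeasurableAdd G] {μ : Measure G} {g : G}
    (hμ : MeasurePreserving (g + ·) μ μ) {χ : G → ℂ} (hχ : ∀ x, χ (g + x) = χ g * χ x)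
    (hg : χ g ≠ 1) : ∫ x, χ x ∂μ = 0 := by
  have h : χ g * ∫ x, χ x ∂μ = ∫ x, χ x ∂μ := calc
    _ = ∫ x, χ (g + x) ∂μ := by simp only [hχ, integral_const_mul]
    _ = ∫ x, χ x ∂μ := hμ.integral_comp (measurableEmbedding_addLeft g) χ
  have : (χ g - 1) * ∫ x, χ x ∂μ = 0 := by rw [sub_mul, h, one_mul, sub_self]
  exact (mul_eq_zero.mp this).resolve_left (sub_ne_zero.mpr hg)

theorem UnitAddCircle.exists_eq_add_intCast_of_coe_eq {x y : ℝ} (h : (x : UnitAddCircle) = y) :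
    ∃ m : ℤ, y = x + m := by
  obtain ⟨m, hm⟩ := AddSubgroup.mem_zmultiples_iff.mp (QuotientAddGroup.eq.mp h)
  exact ⟨m, by rw [zsmul_eq_mul, mul_one] at hm; linarith⟩

namespace UnitAddTorus

variable {d : Type*} [Fintype d]

theorem mFourier_apply_add (n : d → ℤ) (x y : UnitAddTorus d) :
    mFourier n (x + y) = mFourier n x * mFourier n y := by
  simp only [mFourier, ContinuousMap.coe_mk, Pi.add_apply, fourier_apply, smul_add,
    AddCircle.toCircle_add, Circle.coe_mul, Finset.prod_mul_distrib]

theorem exists_sum_eq_intCast_of_mFourier_coe_eq_one {n : d → ℤ} {v : d → ℝ}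
    (h : mFourier n (fun i => (v i : UnitAddCircle)) = 1) : ∃ k : ℤ, ∑ i, n i * v i = k := by
  simp only [mFourier, ContinuousMap.coe_mk, fourier_coe_apply, Complex.ofReal_one, div_one,
    ← Complex.exp_sum] at h
  obtain ⟨k, hk⟩ := Complex.exp_eq_one_iff.mp h
  refine ⟨k, ?_⟩
  have : (2 * Real.pi * Complex.I : ℂ) ≠ 0 := by simp [Real.pi_ne_zero]
  apply_fun (· / (2 * Real.pi * Complex.I)) at hk
  simp only [Finset.sum_div] at hk
  field_simp at hk
  exact_mod_cast hk

theorem ext_of_integral_mFourier_eq {μ ν : Measure (UnitAddTorus d)} [IsFiniteMeasure μ]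
    [IsFiniteMeasure ν] (h : ∀ n, ∫ x, mFourier n x ∂μ = ∫ x, mFourier n x ∂ν) : μ = ν := by
  have hI : ContinuousMap.integralCLM μ = ContinuousMap.integralCLM ν := by
    refine ContinuousLinearMap.ext_on
      (Submodule.dense_iff_topologicalClosure_eq_top.mpr span_mFourier_closure_eq_top) ?_
    rintro - ⟨n, rfl⟩
    simp only [ContinuousMap.integralCLM_apply, h]
  refine ext_of_forall_integral_eq_of_IsFiniteMeasure fun f => ?_
  have := congr($hI (ContinuousMap.mk (fun x => (f x : ℂ)) (by fun_prop)))
  simp only [ContinuousMap.integralCLM_apply, ContinuousMap.coe_mk] at this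
  exact_mod_cast this

theorem eq_of_measurePreserving_add_left {ξ : UnitAddTorus d}
    (hξ : ∀ n ≠ 0, mFourier n ξ ≠ 1) {μ ν : Measure (UnitAddTorus d)} [IsProbabilityMeasure μ]
    [IsProbabilityMeasure ν] (hμ : MeasurePreserving (ξ + ·) μ μ)
    (hν : MeasurePreserving (ξ + ·) ν ν) : μ = ν := by
  refine ext_of_integral_mFourier_eq fun n => ?_
  rcases eq_or_ne n 0 with rfl | hn
  · simp only [mFourier_zero, ContinuousMap.one_apply, integral_const, probReal_univ, one_smul]
  · rw [integral_eq_zero_of_measurePreserving_add_left hμ (mFourier_apply_add n ξ) (hξ n hn),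
      integral_eq_zero_of_measurePreserving_add_left hν (mFourier_apply_add n ξ) (hξ n hn)]

theorem dense_zmultiples {ξ : UnitAddTorus d} (hξ : ∀ n ≠ 0, mFourier n ξ ≠ 1) :
    Dense (AddSubgroup.zmultiples ξ : Set (UnitAddTorus d)) := by
  set H := (AddSubgroup.zmultiples ξ).topologicalClosure
  have hHc : IsClosed (H : Set (UnitAddTorus d)) := AddSubgroup.isClosed_topologicalClosure _
  have : CompactSpace H := isCompact_iff_compactSpace.mp hHc.isCompact
  set ν : Measure (UnitAddTorus d) := Measure.addHaarMeasure ⊤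
  set μ : Measure (UnitAddTorus d) := (Measure.addHaarMeasure ⊤ : Measure H).map Subtype.val
  have : IsProbabilityMeasure ν := ⟨Measure.addHaarMeasure_self⟩
  have : IsProbabilityMeasure (Measure.addHaarMeasure ⊤ : Measure H) :=
    ⟨Measure.addHaarMeasure_self⟩
  have : IsProbabilityMeasure μ := Measure.isProbabilityMeasure_map (by fun_prop)
  have hξH : ξ ∈ H := AddSubgroup.le_topologicalClosure _ (AddSubgroup.mem_zmultiples ξ)
  have hμ : MeasurePreserving (ξ + ·) μ μ := by
    refine ⟨by fun_prop, ?_⟩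
    rw [Measure.map_map (by fun_prop) (by fun_prop)]
    have : ((ξ + ·) ∘ Subtype.val : H → UnitAddTorus d) = Subtype.val ∘ (⟨ξ, hξH⟩ + ·) := rfl
    rw [this, ← Measure.map_map (by fun_prop) (by fun_prop), map_add_left_eq_self]
  have hμν : μ = ν := eq_of_measurePreserving_add_left hξ hμ (measurePreserving_add_left ν ξ)
  have hcompl : μ (H : Set (UnitAddTorus d))ᶜ = 0 := by
    rw [Measure.map_apply (by fun_prop) hHc.isOpen_compl.measurableSet, preimage_compl,
      Subtype.coe_preimage_self, compl_univ, measure_empty]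
  have : ν.IsOpenPosMeasure := by simp only [ν]; infer_instance
  rw [hμν, hHc.isOpen_compl.measure_eq_zero_iff ν, compl_empty_iff] at hcompl
  exact dense_iff_closure_eq.mpr hcompl

end UnitAddTorus

open UnitAddTorus in
theorem dense_setOf_intCast_mul_add_intCast {α β : ℝ}
    (h : ∀ m n p : ℤ, m * α + n * β = p → m = 0 ∧ n = 0) :
    Dense {x : ℝ × ℝ | ∃ k m₁ m₂ : ℤ, x = (k * α + m₁, k * β + m₂)} := by
  let q : (Fin 2 → ℝ) → UnitAddTorus (Fin 2) := Pi.map fun _ => QuotientAddGroup.mk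
  have hq : IsOpenMap q := IsOpenMap.piMap (fun _ => QuotientAddGroup.isOpenMap_coe)
    (Filter.Eventually.of_forall fun _ => QuotientAddGroup.mk_surjective)
  have hξ : ∀ n ≠ 0, mFourier n (q ![α, β]) ≠ 1 := by
    intro n hn h1
    obtain ⟨k, hk⟩ := exists_sum_eq_intCast_of_mFourier_coe_eq_one h1
    simp only [Fin.sum_univ_two, Matrix.cons_val_zero, Matrix.cons_val_one] at hk
    obtain ⟨h0, h1⟩ := h _ _ _ hk
    exact hn (funext (Fin.forall_fin_two.mpr ⟨h0, h1⟩))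
  refine (((dense_zmultiples hξ).preimage hq).preimage
    Homeomorph.finTwoArrow.symm.isOpenMap).mono ?_
  rintro x ⟨k, hk⟩
  have hcoord : ∀ i, ((k * ![α, β] i : ℝ) : UnitAddCircle) = (![x.1, x.2] i : ℝ) := fun i => by
    rw [← zsmul_eq_mul, QuotientAddGroup.mk_zsmul]
    exact congrFun hk i
  obtain ⟨m₁, hm₁⟩ := UnitAddCircle.exists_eq_add_intCast_of_coe_eq (hcoord 0)
  obtain ⟨m₂, hm₂⟩ := UnitAddCircle.exists_eq_add_intCast_of_coe_eq (hcoord 1)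
  exact ⟨k, m₁, m₂, Prod.ext hm₁ hm₂⟩

theorem round_add_intCast_of_abs_lt {K : Type*} [Field K] [LinearOrder K] [IsStrictOrderedRing K]
    [FloorRing K] {x : K} (hx : |x| < 1 / 2) (m : ℤ) : round (x + m) = m := by
  rw [round_eq_iff]
  constructor <;> linarith [abs_lt.mp hx]

noncomputable def lowerTriangularHomeomorph {p r : ℝ} (q : ℝ) (hp : p ≠ 0) (hr : r ≠ 0) :
    ℝ × ℝ ≃ₜ ℝ × ℝ where
  toFun x := (p * x.1, q * x.1 - r * x.2)
  invFun y := (y.1 / p, (q * (y.1 / p) - y.2) / r)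
  left_inv x := by ext <;> field_simp; ring
  right_inv y := by ext <;> field_simp; ring
  continuous_toFun := by fun_prop
  continuous_invFun := by fun_prop

namespace Stmt8

theorem sfrac_add_intCast_of_abs_lt {x : ℝ} (hx : |x| < 1 / 2) (m : ℤ) : sfrac (x + m) = x := by
  rw [sfrac, round_add_intCast_of_abs_lt hx, add_sub_cancel_right]

section

variable {α θ : ℝ} {a b c d : ℤ}

theorem eq_zero_of_intCast_mul_add_intCast_mul_eq_intCast
    (hind : LinearIndependent ℚ ![(1 : ℝ), α, α ^ 2]) (hd : d ≠ 0)
    (hθ : θ * (c + α * d) = a + α * b) (hθirr : Irrational θ) {m n p : ℤ}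
    (h : m * α + n * θ = p) : m = 0 ∧ n = 0 := by
  have hcoeff := Fintype.linearIndependent_iff.mp hind
    ![((n * a - p * c : ℤ) : ℚ), ((m * c + n * b - p * d : ℤ) : ℚ), ((m * d : ℤ) : ℚ)] (by
      simp only [Fin.sum_univ_three, Matrix.cons_val_zero, Matrix.cons_val_one,
        Matrix.cons_val_two, Matrix.head_cons, Matrix.tail_cons, Rat.smul_def]
      push_cast
      linear_combination (c + α * d) * h - n * hθ)
  have hm : m = 0 := by
    have := hcoeff 2
    simp only [Matrix.cons_val_two, Matrix.tail_cons, Matrix.head_cons, Int.cast_eq_zero] at this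
    exact (mul_eq_zero.mp this).resolve_right hd
  refine ⟨hm, ?_⟩
  by_contra hn
  subst hm
  exact (hθirr.intCast_mul hn).ne_int p (by simpa using h)

theorem mem_sfrac_orbit (hθ : θ * (c + α * d) = a + α * b) {k m₁ m₂ : ℤ} {x y : ℝ}
    (hx : x = k * α + m₁) (hy : y = k * θ + m₂) (h₁ : |d * x| < 1 / 2) (h₂ : |d * y| < 1 / 2)
    (h₃ : |b * x - (c + α * d) * y| < 1 / 2) :
    ((d : ℝ) * x, b * x - (c + α * d) * y) ∈
      {p : ℝ × ℝ | ∃ n : ℤ, p = (sfrac (α * n), sfrac (α * round (θ * n)))} := by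
  have hα : α * ((d * k : ℤ) : ℝ) = d * x + ((-(d * m₁) : ℤ) : ℝ) := by
    push_cast; rw [hx]; ring
  have hθn : θ * ((d * k : ℤ) : ℝ) = d * y + ((-(d * m₂) : ℤ) : ℝ) := by
    push_cast; rw [hy]; ring
  have hαr : α * ((-(d * m₂) : ℤ) : ℝ) =
      (b * x - (c + α * d) * y) + ((k * a - b * m₁ + c * m₂ : ℤ) : ℝ) := by
    push_cast; rw [hx, hy]; linear_combination (k : ℝ) * hθ
  refine ⟨d * k, ?_⟩
  rw [hθn, round_add_intCast_of_abs_lt h₂, hα, hαr, sfrac_add_intCast_of_abs_lt h₁,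
    sfrac_add_intCast_of_abs_lt h₃]

end

theorem interior_mem (α : ℝ) (hind : LinearIndependent ℚ ![(1 : ℝ), α, α ^ 2])
    (a b c d : ℤ) (hd : d ≠ 0) (hcd : (c : ℝ) + α * d ≠ 0)
    (θ : ℝ) (hθ : θ = ((a : ℝ) + α * b) / ((c : ℝ) + α * d))
    (hθirr : Irrational θ) :
    ((0 : ℝ), (0 : ℝ)) ∈ interior (closure
      {p : ℝ × ℝ | ∃ n : ℤ, p = (sfrac (α * n), sfrac (α * round (θ * n)))}) := by
  have hθ' : θ * (c + α * d) = a + α * b := by rw [hθ, div_mul_cancel₀ _ hcd]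
  set S := {p : ℝ × ℝ | ∃ n : ℤ, p = (sfrac (α * n), sfrac (α * round (θ * n)))}
  set G := {x : ℝ × ℝ | ∃ k m₁ m₂ : ℤ, x = (k * α + m₁, k * θ + m₂)}
  have hG : Dense G := dense_setOf_intCast_mul_add_intCast fun m n p =>
    eq_zero_of_intCast_mul_add_intCast_mul_eq_intCast hind hd hθ' hθirr
  set B : Set (ℝ × ℝ) :=
    {x | |d * x.1| < 1 / 2 ∧ |d * x.2| < 1 / 2 ∧ |b * x.1 - (c + α * d) * x.2| < 1 / 2}
  have hB : IsOpen B := by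
    simp only [B, ofPred_and]
    exact (isOpen_lt (by fun_prop) (by fun_prop)).inter
      ((isOpen_lt (by fun_prop) (by fun_prop)).inter (isOpen_lt (by fun_prop) (by fun_prop)))
  have h0 : (0, 0) ∈ interior (closure (B ∩ G)) :=
    interior_maximal (hG.open_subset_closure_inter hB) hB (by simp [B])
  set L := lowerTriangularHomeomorph (b : ℝ) (Int.cast_ne_zero.mpr hd) hcd
  have hL : L '' (B ∩ G) ⊆ S := by
    rintro _ ⟨x, ⟨⟨h₁, h₂, h₃⟩, k, m₁, m₂, rfl⟩, rfl⟩
    exact mem_sfrac_orbit hθ' rfl rfl h₁ h₂ h₃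
  have hL0 : L (0, 0) = (0, 0) := by simp [L, lowerTriangularHomeomorph]
  rw [← hL0]
  refine interior_mono (closure_mono hL) ?_
  rw [← L.image_closure, ← L.image_interior]
  exact mem_image_of_mem L h0

end Stmt8
end

section
/- Let n, n' be positive integers and let h ≥ 1 be an integer. Suppose that for every ε' > 0 there exists ε > 0 such that for every positive integer m with ‖α·m‖ < ε there exists a positive integer m' with ‖α·m'‖ < ε' and |Δ∘g(n, m') − Δ∘g(n', m)| ≤ h. Then there exists a positive integer t such that n' = t·n and ⌊α·n'⌉ = t·⌊α·n⌉. -/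
/-!
Near the Bohr set `{m : ‖α m‖ small}`, `Δ∘g(N, ·)` is linear up to a bounded error:
`Δ∘g(N, m) ≈ β m L_N` with `L_N = α N + ⌊α N⌉`. So the hypothesis gives every small Bohr element
`q` a Bohr match `u` with `|u L_n - q L_n'|` bounded. Nonzero integers of bounded size are not in a
small enough Bohr set, so the matches of `q, 2q, …, Nq` are forced to be `u, 2u, …, Nu`; for large
`N` this gives `‖q L_n' / L_n‖ ≤ 1/8` on a Bohr set.

A real `γ` with `‖γ q‖ ≤ 1/8` on a Bohr set of an irrational `α` lies in `ℤ + ℤ α`: `⟨γ q⟩` is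
additive along walks inside the Bohr set, which forces `⟨γ q⟩ = c ⟨α q⟩` there; thus
`(γ - c α) q + c ⌊α q⌉` is an integer for all Bohr `q`, and Bohr elements in every residue class
make `γ - c α` and `c` integers. Finally `L_n' = (e + f α) L_n` and the linear independence of
`1, α, α²` give `f = 0`, `n' = e n` and `⌊α n'⌉ = e ⌊α n⌉`.
-/

namespace Stmt9

/-- The symmetric discrete derivative `Δ∘g(n, m) = g(n+m) − g(n) − g(m) + g(0)`. -/
def Δo (g : ℤ → ℤ) (n m : ℤ) : ℤ := g (n + m) - g n - g m + g 0

/-- The signed fractional part `⟨x⟩` of the paper; `|signedFract x|` is `‖x‖`. -/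
noncomputable def signedFract (x : ℝ) : ℝ := x - round x

lemma abs_signedFract_eq_norm (x : ℝ) : |signedFract x| = ‖(x : UnitAddCircle)‖ :=
  UnitAddCircle.norm_eq.symm

lemma abs_signedFract_le_half (x : ℝ) : |signedFract x| ≤ 1 / 2 := abs_sub_round x

lemma abs_signedFract_le (x : ℝ) (z : ℤ) : |signedFract x| ≤ |x - z| := round_le x z

lemma round_eq_of_abs_sub_lt {x : ℝ} {z : ℤ} (h : |x - z| < 1 / 2) : round x = z := by
  rw [round_eq_iff]
  constructor <;> linarith [abs_lt.mp h]

lemma signedFract_eq_of_abs_sub_lt {x : ℝ} {z : ℤ} (h : |x - z| < 1 / 2) :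
    signedFract x = x - z := by
  rw [signedFract, round_eq_of_abs_sub_lt h]

lemma signedFract_intCast_mul_add_intCast_mul {x y : ℤ} {u v : ℝ}
    (h : |x * signedFract u + y * signedFract v| < 1 / 2) :
    signedFract (x * u + y * v) = x * signedFract u + y * signedFract v := by
  have key : x * u + y * v - ((x * round u + y * round v : ℤ) : ℝ) =
      x * signedFract u + y * signedFract v := by
    push_cast [signedFract]; ring
  rw [signedFract_eq_of_abs_sub_lt (key ▸ h), key]

lemma signedFract_add {u v : ℝ} (h : |signedFract u| + |signedFract v| < 1 / 2) :
    signedFract (u + v) = signedFract u + signedFract v := by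
  simpa using signedFract_intCast_mul_add_intCast_mul (x := 1) (y := 1)
    ((abs_add_le _ _).trans_lt (by simpa using h))

lemma signedFract_neg {u : ℝ} (h : |signedFract u| < 1 / 2) :
    signedFract (-u) = -signedFract u := by
  simpa using signedFract_intCast_mul_add_intCast_mul (x := -1) (y := 0) (u := u) (v := 0)
    (by simpa using h)

lemma abs_signedFract_neg (u : ℝ) : |signedFract (-u)| = |signedFract u| := by
  simp [abs_signedFract_eq_norm]

lemma abs_signedFract_add_le (u v : ℝ) :
    |signedFract (u + v)| ≤ |signedFract u| + |signedFract v| := by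
  simpa [abs_signedFract_eq_norm] using norm_add_le (u : UnitAddCircle) v

lemma abs_signedFract_sub_le (u v : ℝ) :
    |signedFract (u - v)| ≤ |signedFract u| + |signedFract v| := by
  simpa [sub_eq_add_neg, abs_signedFract_neg] using abs_signedFract_add_le u (-v)

lemma abs_signedFract_intCast_mul_le (k : ℤ) (u : ℝ) :
    |signedFract (k * u)| ≤ |k| * |signedFract u| := by
  simpa [abs_signedFract_eq_norm, Int.norm_eq_abs] using norm_zsmul_le k (u : UnitAddCircle)

lemma signedFract_ne_zero_of_irrational {u : ℝ} (hu : Irrational u) : signedFract u ≠ 0 :=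
  sub_ne_zero.mpr (hu.ne_int _)

lemma abs_signedFract_lt_half_of_irrational {u : ℝ} (hu : Irrational u) :
    |signedFract u| < 1 / 2 := by
  refine (abs_signedFract_le_half u).lt_of_ne fun h => ?_
  rcases abs_eq (by norm_num : (0 : ℝ) ≤ 1 / 2) |>.mp h with h | h
  · exact hu ⟨round u + 1 / 2, by simp [signedFract] at h ⊢; linarith⟩
  · exact hu ⟨round u - 1 / 2, by simp [signedFract] at h ⊢; linarith⟩

section Bohr

variable {α : ℝ}

lemma exists_intCast_mul_add_intCast_near (hα : Irrational α) (y : ℝ) {δ : ℝ}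
    (hδ : 0 < δ) : ∃ j z : ℤ, |j * α + z - y| < δ := by
  have hdense := dense_addSubgroupClosure_pair_iff.mpr (by simpa using hα : Irrational (α / 1))
  obtain ⟨x, hxy, hx⟩ := Metric.dense_iff.mp hdense y δ hδ
  obtain ⟨j, z, rfl⟩ := AddSubgroup.mem_closure_pair.mp hx
  exact ⟨j, z, by simpa [Real.dist_eq] using hxy⟩

lemma exists_signedFract_mul_mem_Ioo (hα : Irrational α) {δ : ℝ} (hδ : 0 < δ)
    (hδ' : δ ≤ 1 / 2) : ∃ p : ℤ, 0 < signedFract (α * p) ∧ signedFract (α * p) < δ := by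
  obtain ⟨j, z, hjz⟩ := exists_intCast_mul_add_intCast_near hα (δ / 2) (half_pos hδ)
  have hjz' := abs_lt.mp hjz
  have hsf : signedFract (α * j) = j * α + z := by
    rw [signedFract_eq_of_abs_sub_lt (z := -z)] <;> push_cast
    · ring
    · rw [abs_lt]; constructor <;> linarith
  exact ⟨j, by rw [hsf]; linarith, by rw [hsf]; linarith⟩

lemma exists_signedFract_mul_lt_modEq (hα : Irrational α) {δ : ℝ} (hδ : 0 < δ)
    (hδ' : δ ≤ 1 / 2) {M : ℤ} (hM : M ≠ 0) (r s : ℤ) :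
    ∃ q : ℤ, |signedFract (α * q)| < δ ∧ q ≡ r [ZMOD M] ∧ round (α * q) ≡ s [ZMOD M] := by
  have hM' : (0 : ℝ) < |(M : ℝ)| := by positivity
  obtain ⟨j, z, hjz⟩ := exists_intCast_mul_add_intCast_near hα ((s - r * α) / M)
    (div_pos hδ hM')
  have key : α * ((r + M * j : ℤ) : ℝ) - ((s - M * z : ℤ) : ℝ) =
      M * (j * α + z - (s - r * α) / M) := by
    push_cast; field_simp; ring
  have hclose : |α * ((r + M * j : ℤ) : ℝ) - ((s - M * z : ℤ) : ℝ)| < δ := by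
    rw [key, abs_mul, ← lt_div_iff₀' hM']; exact hjz
  refine ⟨r + M * j, ?_, ?_, ?_⟩
  · exact (abs_signedFract_le _ _).trans_lt hclose
  · exact (Int.modEq_iff_dvd.mpr ⟨j, by ring⟩).symm
  · rw [round_eq_of_abs_sub_lt (hclose.trans_le hδ')]
    exact (Int.modEq_iff_dvd.mpr ⟨-z, by ring⟩).symm

lemma exists_pos_le_abs_signedFract_mul (hα : Irrational α) (R : ℝ) :
    ∃ ζ > 0, ∀ v : ℤ, v ≠ 0 → |(v : ℝ)| ≤ R → ζ ≤ |signedFract (α * v)| := by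
  set S := (Finset.Icc (-⌈R⌉) ⌈R⌉).erase 0
  have hpos : ∀ v ∈ S, 0 < |signedFract (α * v)| := fun v hv =>
    abs_pos.mpr (signedFract_ne_zero_of_irrational
      (hα.mul_intCast (Finset.ne_of_mem_erase hv)))
  have hmem : ∀ v : ℤ, v ≠ 0 → |(v : ℝ)| ≤ R → v ∈ S := fun v hv hvR => by
    have : |v| ≤ ⌈R⌉ := Int.cast_le.mp ((Int.cast_abs (R := ℝ) ▸ hvR).trans (Int.le_ceil R))
    simpa [S, hv] using abs_le.mp this
  rcases S.eq_empty_or_nonempty with hS | hS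
  · exact ⟨1, one_pos, fun v hv hvR => absurd (hmem v hv hvR) (by simp [hS])⟩
  · obtain ⟨w, hw, hmin⟩ := S.exists_min_image (fun v : ℤ => |signedFract (α * v)|) hS
    exact ⟨_, hpos w hw, fun v hv hvR => hmin v (hmem v hv hvR)⟩

end Bohr

section Rigidity

variable {α γ δ : ℝ}

lemma signedFract_mul_intCast_mul_add_intCast_mul {x y a b : ℤ}
    (h : |x * signedFract (α * a) + y * signedFract (α * b)| < 1 / 2) :
    signedFract (α * ((x * a + y * b : ℤ) : ℝ)) =
      x * signedFract (α * a) + y * signedFract (α * b) := by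
  rw [← signedFract_intCast_mul_add_intCast_mul h]
  push_cast; ring_nf

lemma signedFract_mul_add_of_bohr
    (hγ : ∀ q : ℤ, |signedFract (α * q)| < δ → |signedFract (γ * q)| ≤ 1 / 8) {m c : ℤ}
    (hm : |signedFract (α * m)| < δ) (hc : |signedFract (α * c)| < δ) :
    signedFract (γ * ((m + c : ℤ) : ℝ)) = signedFract (γ * m) + signedFract (γ * c) := by
  rw [Int.cast_add, mul_add]
  exact signedFract_add (by linarith [hγ m hm, hγ c hc])

/-- Peeling off a step `a` while `⟨α·⟩ ≥ 0` and a step `b` otherwise keeps every intermediate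
point in the Bohr set, where `⟨γ·⟩` is additive. -/
lemma signedFract_mul_natCast_mul_add_natCast_mul (hδ : δ ≤ 1 / 2)
    (hγ : ∀ q : ℤ, |signedFract (α * q)| < δ → |signedFract (γ * q)| ≤ 1 / 8) {a b : ℤ}
    (ha : 0 < signedFract (α * a)) (ha' : signedFract (α * a) < δ)
    (hb : signedFract (α * b) < 0) (hb' : -δ < signedFract (α * b)) (x y : ℕ)
    (hxy : |x * signedFract (α * a) + y * signedFract (α * b)| < δ) :
    signedFract (γ * ((x * a + y * b : ℤ) : ℝ)) =
      x * signedFract (γ * a) + y * signedFract (γ * b) := by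
  have hbohr : ∀ x y : ℕ, |x * signedFract (α * a) + y * signedFract (α * b)| < δ →
      |signedFract (α * ((x * a + y * b : ℤ) : ℝ))| < δ := fun x y h => by
    rwa [signedFract_mul_intCast_mul_add_intCast_mul (by push_cast; linarith)]
  have hbohr_a : |signedFract (α * a)| < δ := abs_lt.mpr ⟨by linarith, ha'⟩
  have hbohr_b : |signedFract (α * b)| < δ := abs_lt.mpr ⟨hb', by linarith⟩
  induction hs : x + y generalizing x y with
  | zero =>
    obtain ⟨rfl, rfl⟩ : x = 0 ∧ y = 0 := by omega
    simp [signedFract]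
  | succ s ih =>
    have habs := abs_lt.mp hxy
    rcases le_or_gt 0 (x * signedFract (α * a) + y * signedFract (α * b)) with hT | hT
    · obtain ⟨x, rfl⟩ := Nat.exists_eq_add_one_of_ne_zero (n := x) <| by
        rintro rfl
        have : (1 : ℝ) ≤ y := by exact_mod_cast (show 1 ≤ y by omega)
        push_cast at hT; nlinarith
      have hprev : |x * signedFract (α * a) + y * signedFract (α * b)| < δ := by
        push_cast at habs hT; rw [abs_lt]; constructor <;> linarith
      have hsplit : (((x + 1 : ℕ) : ℤ) * a + y * b : ℤ) = (x * a + y * b) + a := by push_cast; ring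
      rw [hsplit, signedFract_mul_add_of_bohr hγ (hbohr x y hprev) hbohr_a,
        ih x y hprev (by omega)]
      push_cast; ring
    · obtain ⟨y, rfl⟩ := Nat.exists_eq_add_one_of_ne_zero (n := y) <| by
        rintro rfl
        have : (1 : ℝ) ≤ x := by exact_mod_cast (show 1 ≤ x by omega)
        push_cast at hT; nlinarith
      have hprev : |x * signedFract (α * a) + y * signedFract (α * b)| < δ := by
        push_cast at habs hT; rw [abs_lt]; constructor <;> linarith
      have hsplit : (x * a + ((y + 1 : ℕ) : ℤ) * b : ℤ) = (x * a + y * b) + b := by push_cast; ring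
      rw [hsplit, signedFract_mul_add_of_bohr hγ (hbohr x y hprev) hbohr_b,
        ih x y hprev (by omega)]
      push_cast; ring

lemma signedFract_mul_mul_signedFract_eq (hδ : δ ≤ 1 / 2)
    (hγ : ∀ q : ℤ, |signedFract (α * q)| < δ → |signedFract (γ * q)| ≤ 1 / 8) {a b : ℤ}
    (ha : 0 < signedFract (α * a)) (ha' : signedFract (α * a) < δ)
    (hb : signedFract (α * b) < 0) (hb' : -δ < signedFract (α * b)) :
    signedFract (γ * a) * signedFract (α * b) = signedFract (γ * b) * signedFract (α * a) := by
  set θa := signedFract (α * a)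
  set θb := signedFract (α * b)
  set ψa := signedFract (γ * a)
  set ψb := signedFract (γ * b)
  have hψa : |ψa| ≤ 1 / 8 := hγ a (abs_lt.mpr ⟨by linarith, ha'⟩)
  -- Walk `X` steps `b` and just enough steps `a` to return to `⟨α·⟩ ∈ (0, θa]`.
  have hbound : ∀ X : ℕ, X * |ψa * θb - ψb * θa| ≤ θa / 4 := by
    intro X
    set x := ⌊X * -θb / θa⌋₊ + 1
    have hX₀ : 0 ≤ X * -θb / θa := div_nonneg (mul_nonneg X.cast_nonneg (by linarith)) ha.le
    have hx₁ : X * -θb < x * θa := by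
      rw [← div_lt_iff₀ ha]; push_cast [x]; exact Nat.lt_floor_add_one _
    have hx₂ : (x - 1 : ℝ) * θa ≤ X * -θb := by
      rw [← le_div_iff₀ ha]; push_cast [x]; simpa using Nat.floor_le hX₀
    set T := x * θa + X * θb
    have hT : |T| < δ := abs_lt.mpr ⟨by linarith, by linarith⟩
    have hψT : |x * ψa + X * ψb| ≤ 1 / 8 := by
      rw [← signedFract_mul_natCast_mul_add_natCast_mul hδ hγ ha ha' hb hb' x X hT]
      refine hγ _ ?_
      rwa [signedFract_mul_intCast_mul_add_intCast_mul (by push_cast; linarith)]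
    have hX : (X : ℝ) * (ψa * θb - ψb * θa) = ψa * T - θa * (x * ψa + X * ψb) := by ring
    calc X * |ψa * θb - ψb * θa| = |ψa * T - θa * (x * ψa + X * ψb)| := by
          rw [← hX, abs_mul, Nat.abs_cast]
      _ ≤ |ψa| * |T| + θa * |x * ψa + X * ψb| := by
          rw [← abs_mul, ← abs_of_pos ha, ← abs_mul, abs_of_pos ha]; exact abs_sub _ _
      _ ≤ 1 / 8 * θa + θa * (1 / 8) := by
          gcongr
          rw [abs_of_pos (by linarith)]; linarith
      _ = θa / 4 := by ring
  by_contra hne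
  have hpos : 0 < |ψa * θb - ψb * θa| := abs_pos.mpr (sub_ne_zero.mpr hne)
  obtain ⟨X, hX⟩ := exists_nat_gt (θa / 4 / |ψa * θb - ψb * θa|)
  rw [div_lt_iff₀ hpos] at hX
  linarith [hbound X]

lemma exists_signedFract_mul_eq_mul (hα : Irrational α) (hδ₀ : 0 < δ) (hδ : δ ≤ 1 / 2)
    (hγ : ∀ q : ℤ, |signedFract (α * q)| < δ → |signedFract (γ * q)| ≤ 1 / 8) :
    ∃ c : ℝ, ∀ q : ℤ, |signedFract (α * q)| < δ →
      signedFract (γ * q) = c * signedFract (α * q) := by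
  obtain ⟨p, hp, hp'⟩ := exists_signedFract_mul_mem_Ioo hα hδ₀ hδ
  refine ⟨signedFract (γ * p) / signedFract (α * p), fun q hq => ?_⟩
  rw [div_mul_eq_mul_div, eq_div_iff hp.ne']
  obtain ⟨hq₁, hq₂⟩ := abs_lt.mp hq
  rcases lt_trichotomy (signedFract (α * q)) 0 with hq₀ | hq₀ | hq₀
  · exact (signedFract_mul_mul_signedFract_eq hδ hγ hp hp' hq₀ hq₁).symm
  · obtain rfl : q = 0 := by
      by_contra hq
      exact signedFract_ne_zero_of_irrational (hα.mul_intCast hq) hq₀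
    simp [signedFract]
  · have hneg : ∀ {u : ℝ}, |signedFract (u * p)| < 1 / 2 → signedFract (u * ((-p : ℤ) : ℝ)) =
        -signedFract (u * p) := fun h => by
      rw [Int.cast_neg, mul_neg, signedFract_neg h]
    have hψp : |signedFract (γ * p)| < 1 / 2 :=
      (hγ p (abs_lt.mpr ⟨by linarith, hp'⟩)).trans_lt (by norm_num)
    have hθp : |signedFract (α * p)| < 1 / 2 := by rw [abs_of_pos hp]; linarith
    have := signedFract_mul_mul_signedFract_eq hδ hγ hq₀ hq₂ (b := -p)
      (by rw [hneg hθp]; linarith) (by rw [hneg hθp]; linarith)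
    rw [hneg hθp, hneg hψp] at this
    linarith

lemma exists_intCast_eq_of_bohr (hα : Irrational α) (hδ₀ : 0 < δ) (hδ : δ ≤ 1 / 2) {c d : ℝ}
    (h : ∀ q : ℤ, |signedFract (α * q)| < δ → ∃ b : ℤ, d * q + c * round (α * q) = b) :
    (∃ e : ℤ, d = e) ∧ ∃ f : ℤ, c = f := by
  obtain ⟨p, hp, hp'⟩ := exists_signedFract_mul_mem_Ioo hα hδ₀ hδ
  have hp₀ : p ≠ 0 := by rintro rfl; simp [signedFract] at hp
  have hpR : (0 : ℝ) < |(p : ℝ)| := by positivity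
  obtain ⟨q, hq, hq'⟩ := exists_signedFract_mul_mem_Ioo hα
    (lt_min hδ₀ (div_pos hp hpR)) ((min_le_left _ _).trans hδ)
  have hq₀ : q ≠ 0 := by rintro rfl; simp [signedFract] at hq
  -- `(p, ⌊α p⌉)` and `(q, ⌊α q⌉)` are not proportional, as `⟨α q⟩ / q` is much smaller.
  set D := p * round (α * q) - q * round (α * p)
  have hD : D ≠ 0 := by
    intro hD
    have hrel : signedFract (α * q) * p = q * signedFract (α * p) := by
      have : (p : ℝ) * round (α * q) = q * round (α * p) := by exact_mod_cast sub_eq_zero.mp hD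
      simp only [signedFract]; linear_combination -this
    have hq1 : (1 : ℝ) ≤ |(q : ℝ)| := by exact_mod_cast Int.one_le_abs hq₀
    have := congrArg abs hrel
    rw [abs_mul, abs_mul, abs_of_pos hq, abs_of_pos hp] at this
    have := (lt_div_iff₀ hpR).mp (hq'.trans_le (min_le_right _ _))
    nlinarith
  obtain ⟨bp, hbp⟩ := h p (by rw [abs_of_pos hp]; exact hp')
  obtain ⟨bq, hbq⟩ := h q (by rw [abs_of_pos hq]; exact hq'.trans_le (min_le_left _ _))
  have hDd : (D : ℝ) * d = bp * round (α * q) - bq * round (α * p) := by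
    push_cast [D]; linear_combination (round (α * q) : ℝ) * hbp - (round (α * p) : ℝ) * hbq
  have hDc : (D : ℝ) * c = p * bq - q * bp := by
    push_cast [D]; linear_combination (p : ℝ) * hbq - (q : ℝ) * hbp
  -- As `D d` and `D c` are integers, integrality at a Bohr point `≡ (r, s) mod D`
  -- gives integrality at `(r, s)`.
  have hint : ∀ r s : ℤ, ∃ b : ℤ, d * r + c * s = b := by
    intro r s
    obtain ⟨m, hm, hmr, hms⟩ := exists_signedFract_mul_lt_modEq hα hδ₀ hδ hD r s
    obtain ⟨k, hk⟩ := hmr.dvd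
    obtain ⟨l, hl⟩ := hms.dvd
    obtain ⟨b, hb⟩ := h m hm
    refine ⟨b + (bp * round (α * q) - bq * round (α * p)) * k + (p * bq - q * bp) * l, ?_⟩
    have hk' : (r : ℝ) - m = D * k := by exact_mod_cast hk
    have hl' : (s : ℝ) - round (α * m) = D * l := by exact_mod_cast hl
    push_cast
    linear_combination hb + d * hk' + c * hl' + k * hDd + l * hDc
  obtain ⟨e, he⟩ := hint 1 0
  obtain ⟨f, hf⟩ := hint 0 1
  exact ⟨⟨e, by simpa using he⟩, f, by simpa using hf⟩

theorem exists_eq_intCast_add_intCast_mul (hα : Irrational α) (hδ₀ : 0 < δ) (hδ : δ ≤ 1 / 2)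
    (hγ : ∀ q : ℤ, |signedFract (α * q)| < δ → |signedFract (γ * q)| ≤ 1 / 8) :
    ∃ e f : ℤ, γ = e + f * α := by
  obtain ⟨c, hc⟩ := exists_signedFract_mul_eq_mul hα hδ₀ hδ hγ
  obtain ⟨⟨e, he⟩, f, hf⟩ := exists_intCast_eq_of_bohr hα hδ₀ hδ (c := c) (d := γ - c * α)
    fun q hq => ⟨round (γ * q), by have := hc q hq; simp only [signedFract] at this; linarith⟩
  exact ⟨e, f, by rw [← he, ← hf]; ring⟩

end Rigidity

section Divisibility

variable {α β : ℝ} {g : ℤ → ℤ}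

lemma abs_Δo_sub_le (hg : ∀ n : ℤ, g n = round (β * n * round (α * n))) {N m : ℤ}
    (h : |signedFract (α * N)| + |signedFract (α * m)| < 1 / 2) :
    |(Δo g N m : ℝ) - β * m * (α * N + round (α * N))| ≤ 3 / 2 + |β * N| / 2 := by
  have hround : round (α * ((N + m : ℤ) : ℝ)) = round (α * N) + round (α * m) := by
    apply round_eq_of_abs_sub_lt
    have : α * ((N + m : ℤ) : ℝ) - ((round (α * N) + round (α * m) : ℤ) : ℝ) =
        signedFract (α * N) + signedFract (α * m) := by push_cast [signedFract]; ring
    rw [this]; exact (abs_add_le _ _).trans_lt h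
  have hΔ : (Δo g N m : ℝ) = round (β * (N + m) * (round (α * N) + round (α * m)))
      - round (β * N * round (α * N)) - round (β * m * round (α * m)) := by
    simp only [Δo, hg, hround]
    push_cast
    simp
  have e₁ := abs_le.mp <| abs_sub_round (β * (N + m) * (round (α * N) + round (α * m)))
  have e₂ := abs_le.mp <| abs_sub_round (β * N * round (α * N))
  have e₃ := abs_le.mp <| abs_sub_round (β * m * round (α * m))
  have e₄ : |β * N * signedFract (α * m)| ≤ |β * N| / 2 := by
    rw [abs_mul]; nlinarith [abs_signedFract_le_half (α * m), abs_nonneg (β * N)]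
  have e₄ := abs_le.mp e₄
  simp only [signedFract] at e₄
  rw [hΔ, abs_le]
  constructor <;> linarith

lemma abs_mul_sub_mul_le_of_abs_Δo_sub_le (hβ : β ≠ 0)
    (hg : ∀ n : ℤ, g n = round (β * n * round (α * n))) {n n' m m' h : ℤ}
    (hn : |signedFract (α * n)| + |signedFract (α * m')| < 1 / 2)
    (hn' : |signedFract (α * n')| + |signedFract (α * m)| < 1 / 2)
    (hΔ : |Δo g n m' - Δo g n' m| ≤ h) :
    |m' * (α * n + round (α * n)) - m * (α * n' + round (α * n'))| ≤
      (h + 3 + |β * n| + |β * n'|) / |β| := by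
  have e₁ := abs_le.mp (abs_Δo_sub_le hg hn)
  have e₂ := abs_le.mp (abs_Δo_sub_le hg hn')
  have e₃ := abs_le.mp (show |(Δo g n m' : ℝ) - Δo g n' m| ≤ h by exact_mod_cast hΔ)
  rw [le_div_iff₀ (abs_pos.mpr hβ), ← abs_mul, abs_le]
  constructor <;> linarith [abs_nonneg (β * n), abs_nonneg (β * n')]

lemma exists_bohr_match (hα : Irrational α) (hβ : β ≠ 0)
    (hg : ∀ n : ℤ, g n = round (β * n * round (α * n))) {n n' h : ℤ} (hn : n ≠ 0)
    (hn' : n' ≠ 0) (hh : 0 ≤ h)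
    (hyp : ∀ ε' : ℝ, 0 < ε' → ∃ ε : ℝ, 0 < ε ∧ ∀ m : ℤ, 0 < m →
      |signedFract (α * m)| < ε → ∃ m' : ℤ, 0 < m' ∧
        |signedFract (α * m')| < ε' ∧ |Δo g n m' - Δo g n' m| ≤ h)
    {η : ℝ} (hη : 0 < η) :
    ∃ ε > 0, ∀ q : ℤ, |signedFract (α * q)| < ε → ∃ u : ℤ, |signedFract (α * u)| < η ∧
      |u * (α * n + round (α * n)) - q * (α * n' + round (α * n'))| ≤
        (h + 3 + |β * n| + |β * n'|) / |β| := by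
  have hirr : ∀ {k : ℤ}, k ≠ 0 → |signedFract (α * k)| < 1 / 2 := fun hk =>
    abs_signedFract_lt_half_of_irrational (hα.mul_intCast hk)
  set κ := 1 / 2 - max |signedFract (α * n)| |signedFract (α * n')| with hκ_def
  have hκ : 0 < κ := sub_pos.mpr (max_lt (hirr hn) (hirr hn'))
  obtain ⟨ε, hε, hm⟩ := hyp (min η κ) (lt_min hη hκ)
  have hpos : ∀ q : ℤ, 0 < q → |signedFract (α * q)| < min ε κ → ∃ u : ℤ,
      |signedFract (α * u)| < η ∧ |u * (α * n + round (α * n)) - q * (α * n' + round (α * n'))|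
        ≤ (h + 3 + |β * n| + |β * n'|) / |β| := by
    intro q hq hqε
    obtain ⟨u, -, hu, hΔ⟩ := hm q hq (hqε.trans_le (min_le_left _ _))
    refine ⟨u, hu.trans_le (min_le_left _ _), abs_mul_sub_mul_le_of_abs_Δo_sub_le hβ hg ?_ ?_ hΔ⟩
    · linarith [le_max_left |signedFract (α * n)| |signedFract (α * n')|, hκ_def,
        hu.trans_le (min_le_right _ _)]
    · linarith [le_max_right |signedFract (α * n)| |signedFract (α * n')|, hκ_def,
        hqε.trans_le (min_le_right _ _)]
  refine ⟨min ε κ, lt_min hε hκ, fun q hq => ?_⟩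
  rcases lt_trichotomy q 0 with hq₀ | rfl | hq₀
  · obtain ⟨u, hu, hmatch⟩ := hpos (-q) (neg_pos.mpr hq₀)
      (by rwa [Int.cast_neg, mul_neg, abs_signedFract_neg])
    refine ⟨-u, by rwa [Int.cast_neg, mul_neg, abs_signedFract_neg], ?_⟩
    rw [← abs_neg]; convert hmatch using 2; push_cast; ring
  · refine ⟨0, by simpa [signedFract] using hη, ?_⟩
    have : (0 : ℝ) ≤ h := by exact_mod_cast hh
    simp only [Int.cast_zero, zero_mul, sub_zero, abs_zero]
    exact div_nonneg (by positivity) (abs_nonneg β)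
  · exact hpos q hq₀ hq

end Divisibility

section Matches

variable {α L L' C ζ : ℝ}

/-- Matches are additive: `w - u - u'` is a bounded integer in a Bohr set below the gap. -/
lemma eq_add_of_bohr_match (hL : L ≠ 0)
    (hgap : ∀ v : ℤ, v ≠ 0 → |(v : ℝ)| ≤ 3 * C / |L| → ζ ≤ |signedFract (α * v)|)
    {q q' u u' w : ℤ} (hu : |signedFract (α * u)| < ζ / 3) (hu' : |signedFract (α * u')| < ζ / 3)
    (hw : |signedFract (α * w)| < ζ / 3) (huq : |u * L - q * L'| ≤ C)
    (huq' : |u' * L - q' * L'| ≤ C) (hwq : |w * L - ((q + q' : ℤ) : ℝ) * L'| ≤ C) :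
    w = u + u' := by
  by_contra hne
  have hv : w - u - u' ≠ 0 := fun h => hne (by linarith)
  refine (hgap _ hv ?_).not_gt ?_
  · rw [le_div_iff₀ (abs_pos.mpr hL), ← abs_mul]
    calc |((w - u - u' : ℤ) : ℝ) * L|
        = |(w * L - ((q + q' : ℤ) : ℝ) * L') - (u * L - q * L') - (u' * L - q' * L')| := by
          push_cast; ring_nf
      _ ≤ C + C + C :=
          (abs_sub _ _).trans (add_le_add ((abs_sub _ _).trans (add_le_add hwq huq)) huq')
      _ = 3 * C := by ring
  · calc |signedFract (α * ((w - u - u' : ℤ) : ℝ))|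
        = |signedFract (α * w - α * u - α * u')| := by push_cast; ring_nf
      _ ≤ |signedFract (α * w)| + |signedFract (α * u)| + |signedFract (α * u')| :=
          (abs_signedFract_sub_le _ _).trans (add_le_add (abs_signedFract_sub_le _ _) le_rfl)
      _ < ζ := by linarith

lemma abs_signedFract_div_mul_le {ε : ℝ} (hL : L ≠ 0)
    (hgap : ∀ v : ℤ, v ≠ 0 → |(v : ℝ)| ≤ 3 * C / |L| → ζ ≤ |signedFract (α * v)|)
    (hmatch : ∀ q : ℤ, |signedFract (α * q)| < ε →
      ∃ u : ℤ, |signedFract (α * u)| < ζ / 3 ∧ |u * L - q * L'| ≤ C)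
    {N : ℕ} (hN : 0 < N) {q : ℤ} (hq : |signedFract (α * q)| < ε / N) :
    |signedFract (L' / L * q)| ≤ C / (N * |L|) := by
  have hNR : (0 : ℝ) < N := by exact_mod_cast hN
  have hmul : ∀ j : ℕ, j ≤ N → |signedFract (α * ((j * q : ℤ) : ℝ))| < ε := by
    intro j hj
    calc |signedFract (α * ((j * q : ℤ) : ℝ))| = |signedFract ((j : ℤ) * (α * q))| := by
          push_cast; ring_nf
      _ ≤ |(j : ℤ)| * |signedFract (α * q)| := abs_signedFract_intCast_mul_le _ _
      _ ≤ N * |signedFract (α * q)| := by gcongr; simpa using hj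
      _ < N * (ε / N) := by gcongr
      _ = ε := by field_simp
  obtain ⟨u, hu, huq⟩ := hmatch q (by simpa using hmul 1 hN)
  have hmatch_mul : ∀ j : ℕ, 1 ≤ j → j ≤ N → |signedFract (α * ((j * u : ℤ) : ℝ))| < ζ / 3 ∧
      |((j * u : ℤ) : ℝ) * L - ((j * q : ℤ) : ℝ) * L'| ≤ C := by
    intro j hj
    induction j, hj using Nat.le_induction with
    | base => intro _; simpa using ⟨hu, huq⟩
    | succ j hj ih =>
      intro hjN
      obtain ⟨hu_j, huq_j⟩ := ih (by omega)
      obtain ⟨w, hw, hwq⟩ := hmatch _ (hmul (j + 1) hjN)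
      have hsucc : ∀ k : ℤ, ((j + 1 : ℕ) : ℤ) * k = j * k + k := fun k => by push_cast; ring
      rw [hsucc] at hwq ⊢
      rw [hsucc, ← eq_add_of_bohr_match hL hgap hu_j hu hw huq_j huq hwq]
      exact ⟨hw, hwq⟩
  obtain ⟨-, hNq⟩ := hmatch_mul N hN le_rfl
  have hdiff : |u * L - q * L'| ≤ C / N := by
    have hscale : |((N * u : ℤ) : ℝ) * L - ((N * q : ℤ) : ℝ) * L'| =
        |(N : ℝ) * (u * L - q * L')| := by push_cast; ring_nf
    rw [abs_mul, Nat.abs_cast] at hscale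
    rw [le_div_iff₀ hNR, mul_comm, ← hscale]
    exact hNq
  calc |signedFract (L' / L * q)| ≤ |L' / L * q - u| := abs_signedFract_le _ _
    _ = |u * L - q * L'| / |L| := by
        rw [← abs_div, ← abs_neg]; congr 1; field_simp; ring
    _ ≤ C / N / |L| := by gcongr
    _ = C / (N * |L|) := by rw [div_div]

end Matches

lemma eq_zero_of_linearIndependent {α : ℝ} (hind : LinearIndependent ℚ ![(1 : ℝ), α, α ^ 2])
    {a b c : ℚ} (h : (a : ℝ) + b * α + c * α ^ 2 = 0) : a = 0 ∧ b = 0 ∧ c = 0 := by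
  have := Fintype.linearIndependent_iff.mp hind ![a, b, c]
    (by simpa [Fin.sum_univ_three, Rat.smul_def] using h)
  exact ⟨this 0, this 1, this 2⟩

lemma irrational_of_linearIndependent {α : ℝ}
    (hind : LinearIndependent ℚ ![(1 : ℝ), α, α ^ 2]) : Irrational α := by
  rintro ⟨r, hr⟩
  have := eq_zero_of_linearIndependent hind (a := r) (b := -1) (c := 0) (by push_cast; linarith)
  norm_num at this

lemma eq_mul_of_linearIndependent {α : ℝ} (hind : LinearIndependent ℚ ![(1 : ℝ), α, α ^ 2])
    {n n' A A' e f : ℤ} (hn : n ≠ 0) (h : α * n' + A' = (e + f * α) * (α * n + A)) :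
    n' = e * n ∧ A' = e * A := by
  obtain ⟨h₀, h₁, h₂⟩ := eq_zero_of_linearIndependent hind (a := ((e * A - A' : ℤ) : ℚ))
    (b := ((e * n + f * A - n' : ℤ) : ℚ)) (c := ((f * n : ℤ) : ℚ))
    (by push_cast; linear_combination -h)
  have hf : f = 0 := (mul_eq_zero.mp (by exact_mod_cast h₂)).resolve_right hn
  subst hf
  constructor <;> linarith [(by exact_mod_cast h₀ : e * A - A' = 0),
    (by exact_mod_cast h₁ : e * n + 0 * A - n' = 0)]

theorem divisibility_general (α β : ℝ) (hβ : 0 < β)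
    (hind : LinearIndependent ℚ ![(1 : ℝ), α, α ^ 2])
    (g : ℤ → ℤ) (hg : ∀ n : ℤ, g n = round (β * n * round (α * n)))
    (n n' h : ℤ) (hn : 0 < n) (hn' : 0 < n') (hh : 1 ≤ h)
    (hyp : ∀ ε' : ℝ, 0 < ε' → ∃ ε : ℝ, 0 < ε ∧ ∀ m : ℤ, 0 < m →
      |α * m - round (α * m)| < ε → ∃ m' : ℤ, 0 < m' ∧
        |α * m' - round (α * m')| < ε' ∧ |Δo g n m' - Δo g n' m| ≤ h) :
    ∃ t : ℤ, 0 < t ∧ n' = t * n ∧ round (α * n') = t * round (α * n) := by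
  have hα := irrational_of_linearIndependent hind
  set L := α * n + round (α * n)
  set L' := α * n' + round (α * n')
  set C := ((h : ℝ) + 3 + |β * n| + |β * n'|) / |β|
  have hL : L ≠ 0 := ((hα.mul_intCast hn.ne').add_intCast _).ne_zero
  have hC : 0 ≤ C := by
    have : (1 : ℝ) ≤ h := by exact_mod_cast hh
    exact div_nonneg (by linarith [abs_nonneg (β * n), abs_nonneg (β * n')]) (abs_nonneg β)
  obtain ⟨ζ, hζ, hgap⟩ := exists_pos_le_abs_signedFract_mul hα (3 * C / |L|)
  obtain ⟨ε, hε, hmatch⟩ :=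
    exists_bohr_match hα hβ.ne' hg hn.ne' hn'.ne' (by omega) hyp (div_pos hζ three_pos)
  obtain ⟨N, hN⟩ := exists_nat_gt (8 * C / |L|)
  have hN₀ : 0 < N := by exact_mod_cast (by positivity : 0 ≤ 8 * C / |L|).trans_lt hN
  obtain ⟨e, f, hef⟩ := exists_eq_intCast_add_intCast_mul hα (δ := min (ε / N) (1 / 2))
    (by positivity) (min_le_right _ _) fun q hq =>
      (abs_signedFract_div_mul_le hL hgap hmatch hN₀ (hq.trans_le (min_le_left _ _))).trans <| by
        rw [div_le_iff₀ (by positivity)]; rw [div_lt_iff₀ (by positivity)] at hN; linarith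
  obtain ⟨hn'e, hA'e⟩ := eq_mul_of_linearIndependent hind hn.ne'
    (show L' = (e + f * α) * L by rw [← hef, div_mul_cancel₀ _ hL])
  exact ⟨e, pos_of_mul_pos_left (hn'e ▸ hn') hn.le, hn'e, hA'e⟩

theorem divisibility (α β : ℝ) (hα : 0 < α) (hβ : 0 < β)
    (hind : LinearIndependent ℚ ![(1 : ℝ), α, α ^ 2])
    (hβ' : (∃ b : ℤ, β = (b : ℝ)) ∨ Irrational β)
    (g : ℤ → ℤ) (hg : ∀ n : ℤ, g n = round (β * n * round (α * n)))
    (n n' h : ℤ) (hn : 0 < n) (hn' : 0 < n') (hh : 1 ≤ h)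
    (hyp : ∀ ε' : ℝ, 0 < ε' → ∃ ε : ℝ, 0 < ε ∧ ∀ m : ℤ, 0 < m →
      |α * m - round (α * m)| < ε → ∃ m' : ℤ, 0 < m' ∧
        |α * m' - round (α * m')| < ε' ∧ |Δo g n m' - Δo g n' m| ≤ h) :
    ∃ t : ℤ, 0 < t ∧ n' = t * n ∧ round (α * n') = t * round (α * n) :=
  divisibility_general α β hβ hind g hg n n' h hn hn' hh hyp

end Stmt9
end

section
/- Let n, n', t be positive integers with n' = t·n and ⌊α·n'⌉ = t·⌊α·n⌉, and let ε > 0 satisfy ε < 1/(2t), ε + t·‖α·n‖ < 1/2, and t·ε + ‖α·n‖ < 1/2. Then for every positive integer m with ‖α·m‖ < ε, setting m' := t·m, one has |Δ∘g(n, m') − Δ∘g(n', m)| ≤ 2. -/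
/-!
Under the smallness assumptions, `⌊α·k⌉` is additive on every argument `k` met in the
expression (`n + t m`, `t n + m`, `t n`, `t m`), so each `g k` is the rounding of
`β k ⌊α k⌉` with `⌊α k⌉` a bilinear expression in `⌊α n⌉, ⌊α m⌉`. The six real values then
cancel exactly, and the difference is a signed sum of six rounding errors, each of size
at most `1/2`, three of them strictly below `1/2`.
-/

namespace Stmt10

/-- The symmetric discrete derivative `Δ∘g(n, m) = g(n+m) − g(n) − g(m) + g(0)`. -/
def Δo (g : ℤ → ℤ) (n m : ℤ) : ℤ := g (n + m) - g n - g m + g 0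

lemma round_eq_of_abs_sub_lt {x : ℝ} {k : ℤ} (h : |x - k| < 1 / 2) : round x = k := by
  rw [round_eq_iff]
  constructor <;> linarith [abs_lt.mp h]

lemma round_intCast_mul_add_intCast_mul (x y : ℝ) (a b : ℤ)
    (h : |(a : ℝ)| * |x - round x| + |(b : ℝ)| * |y - round y| < 1 / 2) :
    round (a * x + b * y) = a * round x + b * round y := by
  apply round_eq_of_abs_sub_lt
  have hsplit : a * x + b * y - ((a * round x + b * round y : ℤ) : ℝ)
      = a * (x - round x) + b * (y - round y) := by push_cast; ring
  calc |a * x + b * y - ((a * round x + b * round y : ℤ) : ℝ)|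
      ≤ |(a : ℝ)| * |x - round x| + |(b : ℝ)| * |y - round y| := by
        rw [hsplit, ← abs_mul, ← abs_mul]; exact abs_add_le _ _
    _ < 1 / 2 := h

lemma abs_round_add_add_sub_round_add_add_le_two {x₁ x₂ x₃ y₁ y₂ y₃ : ℝ}
    (h : x₁ + x₂ + x₃ = y₁ + y₂ + y₃) :
    |round x₁ + round x₂ + round x₃ - (round y₁ + round y₂ + round y₃)| ≤ 2 := by
  have hlt : |((round x₁ + round x₂ + round x₃ - (round y₁ + round y₂ + round y₃) : ℤ) : ℝ)|
      < 3 := by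
    push_cast
    rw [abs_lt]
    constructor <;>
      linarith [sub_half_lt_round x₁, sub_half_lt_round x₂, sub_half_lt_round x₃,
        sub_half_lt_round y₁, sub_half_lt_round y₂, sub_half_lt_round y₃,
        round_le_add_half x₁, round_le_add_half x₂, round_le_add_half x₃,
        round_le_add_half y₁, round_le_add_half y₂, round_le_add_half y₃]
  have : |round x₁ + round x₂ + round x₃ - (round y₁ + round y₂ + round y₃)| < 3 := by
    exact_mod_cast hlt
  omega

theorem estimate_general (α β : ℝ)
    (g : ℤ → ℤ) (hg : ∀ n : ℤ, g n = round (β * n * round (α * n)))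
    (n n' t : ℤ) (ht : 0 < t)
    (hmul : n' = t * n) (hround : round (α * n') = t * round (α * n))
    (ε : ℝ)
    (hε2 : ε + t * |α * n - round (α * n)| < 1 / 2)
    (hε3 : t * ε + |α * n - round (α * n)| < 1 / 2) :
    ∀ m : ℤ, 0 < m → |α * m - round (α * m)| < ε →
      |Δo g n (t * m) - Δo g n' m| ≤ 2 := by
  intro m _ hm
  have ht' : (0 : ℝ) < t := by exact_mod_cast ht
  have hδn := abs_nonneg (α * n - round (α * n))
  have htm : t * |α * m - round (α * m)| < t * ε := mul_lt_mul_of_pos_left hm ht'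
  have hsplit (a b : ℤ) (h : |(a : ℝ)| * |α * n - round (α * n)|
      + |(b : ℝ)| * |α * m - round (α * m)| < 1 / 2) :
      round (α * ((a * n + b * m : ℤ) : ℝ)) = a * round (α * n) + b * round (α * m) := by
    rw [← round_intCast_mul_add_intCast_mul _ _ a b h]; push_cast; ring_nf
  have hround_n_tm := hsplit 1 t (by rw [abs_of_pos ht']; norm_num; linarith)
  have hround_tn_m := hsplit t 1 (by rw [abs_of_pos ht']; norm_num; linarith)
  have hround_tm := hsplit 0 t (by rw [abs_of_pos ht']; norm_num; linarith)
  simp only [one_mul, zero_mul, zero_add] at hround_n_tm hround_tn_m hround_tm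
  subst hmul
  have hΔ : Δo g n (t * m) - Δo g (t * n) m
      = g (n + t * m) + g (t * n) + g m - (g n + g (t * m) + g (t * n + m)) := by
    simp only [Δo]; ring
  rw [hΔ, hg, hg, hg, hg, hg, hg, hround_n_tm, hround_tn_m, hround_tm, hround]
  apply abs_round_add_add_sub_round_add_add_le_two
  push_cast
  ring

theorem estimate (α β : ℝ) (hα : 0 < α) (hβ : 0 < β)
    (hind : LinearIndependent ℚ ![(1 : ℝ), α, α ^ 2])
    (hβ' : (∃ b : ℤ, β = (b : ℝ)) ∨ Irrational β)
    (g : ℤ → ℤ) (hg : ∀ n : ℤ, g n = round (β * n * round (α * n)))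
    (n n' t : ℤ) (hn : 0 < n) (hn' : 0 < n') (ht : 0 < t)
    (hmul : n' = t * n) (hround : round (α * n') = t * round (α * n))
    (ε : ℝ) (hε : 0 < ε) (hε1 : ε < 1 / (2 * t))
    (hε2 : ε + t * |α * n - round (α * n)| < 1 / 2)
    (hε3 : t * ε + |α * n - round (α * n)| < 1 / 2) :
    ∀ m : ℤ, 0 < m → |α * m - round (α * m)| < ε →
      |Δo g n (t * m) - Δo g n' m| ≤ 2 :=
  estimate_general α β g hg n n' t ht hmul hround ε hε2 hε3

end Stmt10
end

section
/- Let m, r be positive integers with r ≥ 2, and suppose ‖α·m‖ < 1/(2r) and ‖β·m·⌊α·m⌉‖ < 1/(2r²). Then r·m ≤ ℓ(m), and for every integer t with 1 ≤ t ≤ r one has g(t·m) = t²·g(m). -/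
/-!
Write `ε = α m - ⌊α m⌉` and `δ = β m ⌊α m⌉ - g m`. For `1 ≤ t ≤ r` the error `t ε` has absolute
value below `1/2`, so rounding commutes with scaling by `t`: `⌊α t m⌉ = t ⌊α m⌉`. Then
`β (t m) ⌊α t m⌉ = t² (β m ⌊α m⌉) = t² g m + t² δ` with `|t² δ| < 1/2`, so rounding gives `t² g m`.
The bound `r m ≤ ℓ(m)` is the hypothesis `|ε| < 1/(2r)` inverted, which needs `ε ≠ 0`,
i.e. the irrationality of `α`.
-/

namespace Stmt13

/-- `ℓ(m) = m·⌊1/(2·‖α·m‖)⌋`. -/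
noncomputable def ell (α : ℝ) (m : ℤ) : ℤ :=
  m * ⌊1 / (2 * |α * m - round (α * m)|)⌋

theorem irrational_of_linearIndependent_one_pair {x : ℝ}
    (h : LinearIndependent ℚ ![(1 : ℝ), x]) : Irrational x := by
  rintro ⟨q, rfl⟩
  have := (LinearIndependent.pair_iff.mp h) q (-1) (by simp [Rat.smul_def])
  norm_num at this

section Round

variable {K : Type*} [Field K] [LinearOrder K] [IsStrictOrderedRing K] [FloorRing K]

theorem round_intCast_add_of_abs_lt_half (n : ℤ) {x : K} (hx : |x| < 1 / 2) :
    round ((n : K) + x) = n := by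
  obtain ⟨hlo, hhi⟩ := abs_lt.mp hx
  rw [round_intCast_add, round_eq_zero_iff.mpr ⟨hlo.le, hhi⟩, add_zero]

theorem round_intCast_mul_of_abs_mul_lt_half (k : ℤ) {x : K}
    (h : |(k : K) * (x - round x)| < 1 / 2) : round ((k : K) * x) = k * round x := by
  have hsplit : (k : K) * x = ((k * round x : ℤ) : K) + k * (x - round x) := by
    push_cast
    ring
  rw [hsplit, round_intCast_add_of_abs_lt_half _ h]

theorem abs_mul_lt_half_of_le {s k x : K} (hk₀ : 0 ≤ k) (hks : k ≤ s) (hx : |x| < 1 / (2 * s)) :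
    |k * x| < 1 / 2 := by
  have hs : 0 < s := by
    have := one_div_pos.mp ((abs_nonneg x).trans_lt hx)
    linarith
  calc |k * x| = k * |x| := by rw [abs_mul, abs_of_nonneg hk₀]
    _ ≤ s * |x| := mul_le_mul_of_nonneg_right hks (abs_nonneg x)
    _ < s * (1 / (2 * s)) := mul_lt_mul_of_pos_left hx hs
    _ = 1 / 2 := by field_simp

theorem le_floor_one_div_two_mul_abs {r : ℤ} {x : K} (hx₀ : x ≠ 0) (hx : |x| < 1 / (2 * r)) :
    r ≤ ⌊1 / (2 * |x|)⌋ := by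
  have hpos : 0 < 2 * |x| := by positivity
  have hr : (0 : K) < 2 * r := one_div_pos.mp ((abs_nonneg x).trans_lt hx)
  rw [Int.le_floor, le_div_iff₀ hpos]
  have := (lt_div_iff₀ hr).mp hx
  linarith

end Round

theorem long_progression_general (α β : ℝ)
    (hind : LinearIndependent ℚ ![(1 : ℝ), α, α ^ 2])
    (g : ℤ → ℤ) (hg : ∀ n : ℤ, g n = round (β * n * round (α * n)))
    (m r : ℤ) (hm : 0 < m)
    (h1 : |α * m - round (α * m)| < 1 / (2 * r))
    (h2 : |β * m * round (α * m) - round (β * m * round (α * m))| < 1 / (2 * r ^ 2)) :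
    r * m ≤ ell α m ∧ ∀ t : ℤ, 1 ≤ t → t ≤ r → g (t * m) = t ^ 2 * g m := by
  have hα : Irrational α := irrational_of_linearIndependent_one_pair <| by
    convert hind.comp ![0, 1] (by decide) using 1
    ext i; fin_cases i <;> rfl
  have hε : α * m - round (α * m) ≠ 0 :=
    sub_ne_zero.mpr ((hα.mul_intCast hm.ne').ne_int _)
  refine ⟨?_, fun t ht1 htr => ?_⟩
  · rw [ell, mul_comm r m]
    exact mul_le_mul_of_nonneg_left (le_floor_one_div_two_mul_abs hε h1) hm.le
  have ht : (0 : ℝ) ≤ t := by exact_mod_cast (zero_le_one.trans ht1)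
  have hround : round (α * (t * m : ℤ)) = t * round (α * m) := by
    rw [Int.cast_mul, mul_left_comm]
    exact round_intCast_mul_of_abs_mul_lt_half t
      (abs_mul_lt_half_of_le ht (by exact_mod_cast htr) h1)
  have hscale : β * (t * m : ℤ) * (t * round (α * m) : ℤ)
      = ((t ^ 2 : ℤ) : ℝ) * (β * m * round (α * m)) := by
    push_cast
    ring
  rw [hg, hg, hround, hscale]
  exact round_intCast_mul_of_abs_mul_lt_half _
    (abs_mul_lt_half_of_le (by positivity) (by push_cast; gcongr) h2)

theorem long_progression (α β : ℝ) (hα : 0 < α) (hβ : 0 < β)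
    (hind : LinearIndependent ℚ ![(1 : ℝ), α, α ^ 2])
    (hβ' : (∃ b : ℤ, β = (b : ℝ)) ∨ Irrational β)
    (g : ℤ → ℤ) (hg : ∀ n : ℤ, g n = round (β * n * round (α * n)))
    (m r : ℤ) (hm : 0 < m) (hr : 2 ≤ r)
    (h1 : |α * m - round (α * m)| < 1 / (2 * r))
    (h2 : |β * m * round (α * m) - round (β * m * round (α * m))| < 1 / (2 * r ^ 2)) :
    r * m ≤ ell α m ∧ ∀ t : ℤ, 1 ≤ t → t ≤ r → g (t * m) = t ^ 2 * g m :=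
  long_progression_general α β hind g hg m r hm h1 h2

end Stmt13
end
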